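/- For β ≥ 2 there exists a constant c > 0 such that for all x, for all q, q̃, r ∈ ℝ⁴ and all η > 0: |(g_q(x,q̃) − g_q(x,q))·r| ≤ max(|p|^{β−2}, |p̃|^{β−2}) · ((c/η)|p − p̃|² + η|r|²), where p = (q₁⁻,q₂⁺,q₃⁻,q₄⁺), p̃ = (q̃₁⁻,q̃₂⁺,q̃₃⁻,q̃₄⁺). -/

import Mathlib

open Real Finset

/-- Euclidean norm on `ℝ⁴`. -/
noncomputable def nrm (p : Fin 4 → ℝ) : ℝ := (∑ i, p i ^ 2) ^ ((1 : ℝ) / 2)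

/-- Dot product on `ℝ⁴`. -/
def dot (p r : Fin 4 → ℝ) : ℝ := ∑ i, p i * r i

/-- `p = (q₁⁻, q₂⁺, q₃⁻, q₄⁺)`. -/
noncomputable def pvec (q : Fin 4 → ℝ) : Fin 4 → ℝ :=
  ![max (-(q 0)) 0, max (q 1) 0, max (-(q 2)) 0, max (q 3) 0]

/-- `G(p) = |p|^β`. -/
noncomputable def Gfun (β : ℝ) (p : Fin 4 → ℝ) : ℝ := nrm p ^ β

/-- `G_p(p) · v = β |p|^(β-2) p · v`. -/
noncomputable def Gp (β : ℝ) (p v : Fin 4 → ℝ) : ℝ := β * nrm p ^ (β - 2) * dot p v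

/-- The numerical Hamiltonian `g(x,q) = H(x) + G(q₁⁻, q₂⁺, q₃⁻, q₄⁺)`. -/
noncomputable def gfun (β : ℝ) (H : ℝ × ℝ → ℝ) (x : ℝ × ℝ) (q : Fin 4 → ℝ) : ℝ :=
  H x + Gfun β (pvec q)

/-- The gradient of `g` w.r.t. `q`, applied to `r`:
`g_q(x,q) · r = β |p|^(β-2) (−p₁ r₁ + p₂ r₂ − p₃ r₃ + p₄ r₄)` where `p = pvec q`. -/
noncomputable def gq (β : ℝ) (q r : Fin 4 → ℝ) : ℝ :=
  β * nrm (pvec q) ^ (β - 2) *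
    (-(pvec q 0) * r 0 + pvec q 1 * r 1 - pvec q 2 * r 2 + pvec q 3 * r 3)

/-!
With `S = diag(-1, 1, -1, 1)` we have `g_q(q) · r = β ⟪|p|^(β-2) p, S r⟫`. In any real normed
space and for `γ ≥ 0`, `‖|y|^γ y - |x|^γ x‖ ≤ (γ + 1) max(|x|^γ, |y|^γ) |y - x|`: if `|x| ≤ |y|`,
split the difference as `|y|^γ (y - x) + (|y|^γ - |x|^γ) x` and bound the second term by
`γ |y|^γ (|y| - |x|)`, which is weighted AM-GM. Cauchy-Schwarz with `|S r| = |r|` and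
`ab ≤ a²/(4η) + η b²` give the claim with `c = (β(β-1))²/4`.
-/

open scoped RealInnerProductSpace

theorem rpow_sub_rpow_mul_le {γ a b : ℝ} (hγ : 0 ≤ γ) (ha : 0 ≤ a) (hb : 0 ≤ b) :
    (a ^ γ - b ^ γ) * b ≤ γ * a ^ γ * (a - b) := by
  have hγ1 : 0 < γ + 1 := by linarith
  have hamgm := Real.geom_mean_le_arith_mean2_weighted (w₁ := γ / (γ + 1)) (w₂ := 1 / (γ + 1))
    (by positivity) (by positivity) (Real.rpow_nonneg ha (γ + 1)) (Real.rpow_nonneg hb (γ + 1))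
    (by field_simp)
  rw [← Real.rpow_mul ha, ← Real.rpow_mul hb, mul_div_cancel₀ _ hγ1.ne',
    mul_one_div_cancel hγ1.ne', Real.rpow_one] at hamgm
  have hyoung : (γ + 1) * (a ^ γ * b) ≤ γ * a ^ (γ + 1) + b ^ (γ + 1) :=
    calc (γ + 1) * (a ^ γ * b)
        ≤ (γ + 1) * (γ / (γ + 1) * a ^ (γ + 1) + 1 / (γ + 1) * b ^ (γ + 1)) := by gcongr
      _ = γ * a ^ (γ + 1) + b ^ (γ + 1) := by field_simp
  rw [Real.rpow_add' ha hγ1.ne', Real.rpow_add' hb hγ1.ne', Real.rpow_one, Real.rpow_one] at hyoung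
  linarith

theorem norm_rpow_smul_sub_rpow_smul_le {E : Type*} [SeminormedAddCommGroup E] [NormedSpace ℝ E]
    {γ : ℝ} (hγ : 0 ≤ γ) (x y : E) :
    ‖‖y‖ ^ γ • y - ‖x‖ ^ γ • x‖ ≤ (γ + 1) * max (‖x‖ ^ γ) (‖y‖ ^ γ) * ‖y - x‖ := by
  wlog hxy : ‖x‖ ≤ ‖y‖ generalizing x y
  · have := this y x (le_of_not_ge hxy)
    rwa [norm_sub_rev, max_comm, norm_sub_rev x] at this
  have hpow : ‖x‖ ^ γ ≤ ‖y‖ ^ γ := Real.rpow_le_rpow (norm_nonneg x) hxy hγ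
  rw [max_eq_right hpow]
  calc ‖‖y‖ ^ γ • y - ‖x‖ ^ γ • x‖
      = ‖‖y‖ ^ γ • (y - x) + (‖y‖ ^ γ - ‖x‖ ^ γ) • x‖ := by
        rw [smul_sub, sub_smul, sub_add_sub_cancel]
    _ ≤ ‖y‖ ^ γ * ‖y - x‖ + (‖y‖ ^ γ - ‖x‖ ^ γ) * ‖x‖ := by
        refine (norm_add_le _ _).trans_eq ?_
        rw [norm_smul, norm_smul, Real.norm_of_nonneg (by positivity),
          Real.norm_of_nonneg (sub_nonneg.2 hpow)]
    _ ≤ ‖y‖ ^ γ * ‖y - x‖ + γ * ‖y‖ ^ γ * (‖y‖ - ‖x‖) :=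
        add_le_add le_rfl (rpow_sub_rpow_mul_le hγ (norm_nonneg y) (norm_nonneg x))
    _ ≤ ‖y‖ ^ γ * ‖y - x‖ + γ * ‖y‖ ^ γ * ‖y - x‖ := by
        gcongr
        exact norm_sub_norm_le y x
    _ = (γ + 1) * ‖y‖ ^ γ * ‖y - x‖ := by ring

theorem nrm_eq_norm (p : Fin 4 → ℝ) : nrm p = ‖WithLp.toLp 2 p‖ := by
  simp [nrm, EuclideanSpace.norm_eq, Real.sqrt_eq_rpow]

theorem dot_eq_inner (p v : Fin 4 → ℝ) : dot p v = ⟪WithLp.toLp 2 p, WithLp.toLp 2 v⟫ := by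
  simp [dot, PiLp.inner_apply, mul_comm]

theorem abs_Gp_sub_Gp_le {β : ℝ} (hβ : 2 ≤ β) (p pt v : Fin 4 → ℝ) :
    |Gp β pt v - Gp β p v|
      ≤ β * (β - 1) * max (nrm p ^ (β - 2)) (nrm pt ^ (β - 2)) * nrm (p - pt) * nrm v := by
  simp only [Gp, nrm_eq_norm, dot_eq_inner, WithLp.toLp_sub]
  set P : EuclideanSpace ℝ (Fin 4) := WithLp.toLp 2 p
  set Pt : EuclideanSpace ℝ (Fin 4) := WithLp.toLp 2 pt
  set V : EuclideanSpace ℝ (Fin 4) := WithLp.toLp 2 v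
  have hdiff : β * ‖Pt‖ ^ (β - 2) * ⟪Pt, V⟫ - β * ‖P‖ ^ (β - 2) * ⟪P, V⟫
      = β * ⟪‖Pt‖ ^ (β - 2) • Pt - ‖P‖ ^ (β - 2) • P, V⟫ := by
    rw [inner_sub_left, real_inner_smul_left, real_inner_smul_left]
    ring
  have hnorm := norm_rpow_smul_sub_rpow_smul_le (by linarith : 0 ≤ β - 2) P Pt
  rw [show β - 2 + 1 = β - 1 by ring, norm_sub_rev Pt P] at hnorm
  rw [hdiff, abs_mul, abs_of_nonneg (by linarith : 0 ≤ β), mul_assoc _ _ (‖V‖)]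
  calc β * |⟪‖Pt‖ ^ (β - 2) • Pt - ‖P‖ ^ (β - 2) • P, V⟫|
      ≤ β * (‖‖Pt‖ ^ (β - 2) • Pt - ‖P‖ ^ (β - 2) • P‖ * ‖V‖) := by
        gcongr
        exact abs_real_inner_le_norm _ _
    _ ≤ β * ((β - 1) * max (‖P‖ ^ (β - 2)) (‖Pt‖ ^ (β - 2)) * ‖P - Pt‖ * ‖V‖) := by
        gcongr
    _ = _ := by ring

-- The derivative of `pvec` wherever the corresponding entry of `pvec q` is nonzero.
def signFlip (r : Fin 4 → ℝ) : Fin 4 → ℝ := ![-r 0, r 1, -r 2, r 3]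

theorem nrm_signFlip (r : Fin 4 → ℝ) : nrm (signFlip r) = nrm r := by
  simp [nrm, signFlip, Fin.sum_univ_four]

theorem gq_eq_Gp (β : ℝ) (q r : Fin 4 → ℝ) : gq β q r = Gp β (pvec q) (signFlip r) := by
  simp only [gq, Gp, dot, signFlip, Fin.sum_univ_four, Matrix.cons_val]
  ring

theorem mul_le_sq_div_add_mul_sq {η : ℝ} (hη : 0 < η) (a b : ℝ) :
    a * b ≤ a ^ 2 / (4 * η) + η * b ^ 2 := by
  rw [div_add' _ _ _ (by positivity), le_div_iff₀ (by positivity)]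
  nlinarith [sq_nonneg (a - 2 * η * b)]

/-- Lemma 3.4: for `β ≥ 2` there exists `c > 0` such that for all `x`, `q, qt, r ∈ ℝ⁴`
and all `η > 0`:
`|(g_q(x,qt) − g_q(x,q))·r| ≤ max(|p|^(β−2), |pt|^(β−2)) ((c/η)|p − pt|² + η|r|²)`. -/
theorem gq_diff_bound (β : ℝ) (hβ : 2 ≤ β) :
    ∃ c > (0 : ℝ), ∀ (x : ℝ × ℝ) (q qt r : Fin 4 → ℝ) (η : ℝ), 0 < η →
      |gq β qt r - gq β q r|
        ≤ max (nrm (pvec q) ^ (β - 2)) (nrm (pvec qt) ^ (β - 2)) *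
            (c / η * nrm (pvec q - pvec qt) ^ 2 + η * nrm r ^ 2) := by
  have hk : 0 < β * (β - 1) := by nlinarith
  refine ⟨(β * (β - 1)) ^ 2 / 4, by positivity, fun _ q qt r η hη => ?_⟩
  have hM : 0 ≤ max (nrm (pvec q) ^ (β - 2)) (nrm (pvec qt) ^ (β - 2)) :=
    (Real.rpow_nonneg (by rw [nrm_eq_norm]; positivity) _).trans (le_max_left _ _)
  calc |gq β qt r - gq β q r|
      ≤ β * (β - 1) * max (nrm (pvec q) ^ (β - 2)) (nrm (pvec qt) ^ (β - 2))
          * nrm (pvec q - pvec qt) * nrm (signFlip r) := by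
        rw [gq_eq_Gp, gq_eq_Gp]
        exact abs_Gp_sub_Gp_le hβ _ _ _
    _ = max (nrm (pvec q) ^ (β - 2)) (nrm (pvec qt) ^ (β - 2))
          * ((β * (β - 1) * nrm (pvec q - pvec qt)) * nrm r) := by
        rw [nrm_signFlip]
        ring
    _ ≤ _ := by
        gcongr
        exact (mul_le_sq_div_add_mul_sq hη _ _).trans_eq (by ring)
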